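/- Let 0 < p < 1/2, q = 1 − p, and for k ≥ 0 let A_k be the (k+1)×(k+1) traffic-light (ℓ = 1) matrix. Define R_k(z) = det(I − z A_k) for k ≥ 0, and define polynomials R̃_k by R̃_{−1}(z) = 1, R̃_0(z) = 1 − (1 − p²) z, and R̃_k(z) = (1 − 2 p q z) R̃_{k−1}(z) − p² q² z² R̃_{k−2}(z) for k ≥ 1. Then for all k ≥ 1, R_k(z) = R̃_k(z) + p q z · R̃_{k−1}(z). -/

import Mathlib

/-!
Since `A_k` and its untruncated version `B_k` differ only in the entry `(k, k)` (`p q` instead of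
`2 p q`), linearity of the determinant in the last row gives
`det (I - z A_k) = det (I - z B_k) + p q z det (I - z B_{k-1})`. The matrix `I - z B_k` is
tridiagonal, so expanding along its last row and column shows that `det (I - z B_k)` satisfies the
three-term recurrence defining `R̃_k`, with the same initial values.
-/

open Matrix

/-- The `(k+1) × (k+1)` traffic-light (`ℓ = 1`) matrix: nonzero entries are
`A(0,0) = 1 - p²`, `A(i,i) = 2 p q` for `1 ≤ i ≤ k-1`, `A(k,k) = p q`,
`A(i,i-1) = p²` for `1 ≤ i ≤ k`, and `A(i,i+1) = q²` for `0 ≤ i ≤ k-1`,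
where `q = 1 - p`. -/
noncomputable def tlA (p : ℝ) (k : ℕ) : Matrix (Fin (k + 1)) (Fin (k + 1)) ℝ :=
  fun i j =>
    if (i : ℕ) = 0 ∧ (j : ℕ) = 0 then 1 - p ^ 2
    else if (i : ℕ) = (j : ℕ) ∧ (i : ℕ) = k then p * (1 - p)
    else if (i : ℕ) = (j : ℕ) then 2 * p * (1 - p)
    else if (j : ℕ) + 1 = (i : ℕ) then p ^ 2
    else if (i : ℕ) + 1 = (j : ℕ) then (1 - p) ^ 2
    else 0

/-- Index-shifted auxiliary polynomials: `Rtrec p z (k+1)` is the `R̃_k(z)` of the paper: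
`R̃_{-1}(z) = 1`, `R̃_0(z) = 1 - (1-p²) z`, and
`R̃_k(z) = (1 - 2pqz) R̃_{k-1}(z) - p²q²z² R̃_{k-2}(z)` for `k ≥ 1`. -/
noncomputable def Rtrec (p z : ℝ) : ℕ → ℝ
  | 0 => 1
  | 1 => 1 - (1 - p ^ 2) * z
  | (k + 2) =>
    (1 - 2 * p * (1 - p) * z) * Rtrec p z (k + 1)
      - p ^ 2 * (1 - p) ^ 2 * z ^ 2 * Rtrec p z k

namespace Matrix

variable {R : Type*} [CommRing R] {n : ℕ}

theorem det_succ_eq_of_col_last_eq_zero (M : Matrix (Fin (n + 1)) (Fin (n + 1)) R)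
    (hcol : ∀ i : Fin n, M i.castSucc (Fin.last n) = 0) :
    M.det = M (Fin.last n) (Fin.last n) * (M.submatrix Fin.castSucc Fin.castSucc).det := by
  rw [det_succ_column M (Fin.last n), Fin.sum_univ_castSucc]
  simp [hcol]

theorem det_add_single_last_last (M : Matrix (Fin (n + 1)) (Fin (n + 1)) R) (c : R) :
    (M + single (Fin.last n) (Fin.last n) c).det
      = M.det + c * (M.submatrix Fin.castSucc Fin.castSucc).det := by
  have hminor : ∀ j : Fin (n + 1),
      (M + single (Fin.last n) (Fin.last n) c).submatrix (Fin.last n).succAbove j.succAbove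
        = M.submatrix (Fin.last n).succAbove j.succAbove := by
    intro j
    ext a b
    simp [(Fin.castSucc_lt_last a).ne']
  rw [det_succ_row _ (Fin.last n), det_succ_row M (Fin.last n)]
  simp only [hminor, add_apply, mul_add, add_mul, Finset.sum_add_distrib]
  congr 1
  rw [Fintype.sum_eq_single (Fin.last n)]
  · simp
  · intro j hj
    simp [Ne.symm hj]

theorem det_succ_succ_eq_of_last_row_col_eq_zero (M : Matrix (Fin (n + 2)) (Fin (n + 2)) R)
    (hrow : ∀ j : Fin n, M (Fin.last _) j.castSucc.castSucc = 0)
    (hcol : ∀ i : Fin n, M i.castSucc.castSucc (Fin.last _) = 0) :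
    M.det = M (Fin.last _) (Fin.last _) * (M.submatrix Fin.castSucc Fin.castSucc).det
      - M (Fin.last _) (Fin.last n).castSucc * M (Fin.last n).castSucc (Fin.last _)
        * (M.submatrix (Fin.castSucc ∘ Fin.castSucc) (Fin.castSucc ∘ Fin.castSucc)).det := by
  rw [det_succ_row M (Fin.last _), Fin.sum_univ_castSucc, Fin.sum_univ_castSucc]
  have hskip : (Fin.last n).castSucc.succAbove ∘ Fin.castSucc = Fin.castSucc ∘ Fin.castSucc :=
    funext fun j => Fin.succAbove_of_castSucc_lt _ _ (by simp [Fin.castSucc_lt_last])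
  rw [det_succ_eq_of_col_last_eq_zero (M.submatrix _ _)]
  · simp [hrow, submatrix_submatrix, hskip]
    ring
  · intro i
    simpa [Fin.succAbove_of_castSucc_lt, Fin.castSucc_lt_last] using hcol i

end Matrix

/-- `tlA p k` with the boundary entry `p q` at `(k, k)` replaced by the interior value `2 p q`. -/
noncomputable def tlB (p : ℝ) (k : ℕ) : Matrix (Fin (k + 1)) (Fin (k + 1)) ℝ :=
  fun i j =>
    if (i : ℕ) = 0 ∧ (j : ℕ) = 0 then 1 - p ^ 2
    else if (i : ℕ) = (j : ℕ) then 2 * p * (1 - p)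
    else if (j : ℕ) + 1 = (i : ℕ) then p ^ 2
    else if (i : ℕ) + 1 = (j : ℕ) then (1 - p) ^ 2
    else 0

section
variable (p z : ℝ)

theorem tlA_succ_eq_tlB_sub_single (k : ℕ) :
    tlA p (k + 1) = tlB p (k + 1) - single (Fin.last _) (Fin.last _) (p * (1 - p)) := by
  ext i j
  simp only [tlA, tlB, Matrix.sub_apply, Matrix.single_apply, Fin.ext_iff, Fin.val_last]
  split_ifs <;> first | omega | ring

theorem tlB_submatrix_castSucc (k : ℕ) :
    (tlB p (k + 1)).submatrix Fin.castSucc Fin.castSucc = tlB p k := by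
  ext i j
  simp only [tlB, submatrix_apply, Fin.val_castSucc]

theorem one_sub_smul_tlB_submatrix_castSucc (k : ℕ) :
    (1 - z • tlB p (k + 1)).submatrix Fin.castSucc Fin.castSucc = 1 - z • tlB p k := by
  rw [← tlB_submatrix_castSucc p k]
  ext i j
  simp [one_apply]

theorem det_one_sub_smul_tlB : ∀ k : ℕ, (1 - z • tlB p k).det = Rtrec p z (k + 1)
  | 0 => by simp [tlB, Rtrec, mul_comm]
  | 1 => by
    simp [det_fin_two, tlB, Rtrec]
    ring
  | k + 2 => by
    rw [det_succ_succ_eq_of_last_row_col_eq_zero]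
    · rw [one_sub_smul_tlB_submatrix_castSucc, ← submatrix_submatrix,
        one_sub_smul_tlB_submatrix_castSucc, one_sub_smul_tlB_submatrix_castSucc,
        det_one_sub_smul_tlB (k + 1), det_one_sub_smul_tlB k]
      simp [tlB, Rtrec, one_apply, Fin.ext_iff, add_assoc]
      ring
    all_goals
      intro i
      simp only [Matrix.sub_apply, Matrix.smul_apply, one_apply, tlB, Fin.ext_iff, Fin.val_last,
        Fin.val_castSucc, smul_eq_mul]
      split_ifs <;> first | omega | simp_all

end

theorem tl_R_decomposition_general (p q : ℝ) (hq : q = 1 - p) (z : ℝ) :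
    ∀ k : ℕ, 1 ≤ k →
      (1 - z • tlA p k).det = Rtrec p z (k + 1) + p * q * z * Rtrec p z k := by
  intro k hk
  obtain ⟨k, rfl⟩ := Nat.exists_eq_add_of_le' hk
  have hsplit : 1 - z • tlA p (k + 1)
      = (1 - z • tlB p (k + 1)) + single (Fin.last _) (Fin.last _) (z * (p * (1 - p))) := by
    rw [tlA_succ_eq_tlB_sub_single, smul_sub, smul_single, smul_eq_mul]
    abel
  rw [hsplit, det_add_single_last_last, one_sub_smul_tlB_submatrix_castSucc, det_one_sub_smul_tlB,
    det_one_sub_smul_tlB, hq]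
  ring

/-- For all `k ≥ 1`: `det (I - z A_k) = R̃_k(z) + p q z R̃_{k-1}(z)`
(indices shifted by one: `Rtrec p z (k+1) = R̃_k(z)`). -/
theorem tl_R_decomposition (p q : ℝ) (hp0 : 0 < p) (hp : p < 1 / 2) (hq : q = 1 - p)
    (z : ℝ) :
    ∀ k : ℕ, 1 ≤ k →
      (1 - z • tlA p k).det = Rtrec p z (k + 1) + p * q * z * Rtrec p z k :=
  tl_R_decomposition_general p q hq z
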